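/- Let G be an amply regular graph with parameters (n, d, α, β) with α ≥ 1 and α = β − 1. Then for every edge xy, the Lin-Lu-Yau curvature satisfies κ(x, y) ≥ 2/d. -/

import Mathlib

open Finset SimpleGraph

variable {V : Type*} [Fintype V] [DecidableEq V]

/-- A graph is amply regular with parameters `(n, d, a, b)` if it is `d`-regular on `n`
vertices, adjacent vertices have exactly `a` common neighbors, and vertices at distance 2
have exactly `b` common neighbors. -/
def SimpleGraph.IsAmplyRegular (G : SimpleGraph V) [DecidableRel G.Adj]
    (n d a b : ℕ) : Prop :=
  Fintype.card V = n ∧ G.IsRegularOfDegree d ∧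
    (∀ x y, G.Adj x y → (G.neighborFinset x ∩ G.neighborFinset y).card = a) ∧
    (∀ x y, G.dist x y = 2 → (G.neighborFinset x ∩ G.neighborFinset y).card = b)

/-- The measure `μ_x^p` giving mass `p` to `x` and `(1-p)/deg x` to each neighbor of `x`. -/
noncomputable def muMeasure (G : SimpleGraph V) [DecidableRel G.Adj] (p : ℝ) (x : V) :
    V → ℝ :=
  fun v => if v = x then p else if G.Adj x v then (1 - p) / (G.degree x : ℝ) else 0

/-- `pi` is a transport plan between `mu1` and `mu2`. -/
def IsTransportPlan (mu1 mu2 : V → ℝ) (pi : V → V → ℝ) : Prop :=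
  (∀ u v, 0 ≤ pi u v) ∧ (∀ u, ∑ v, pi u v = mu1 u) ∧ (∀ v, ∑ u, pi u v = mu2 v)

/-- The 1-Wasserstein distance between two measures w.r.t. the graph distance. -/
noncomputable def W1 (G : SimpleGraph V) (mu1 mu2 : V → ℝ) : ℝ :=
  sInf {c : ℝ | ∃ pi, IsTransportPlan mu1 mu2 pi ∧
    c = ∑ u, ∑ v, (G.dist u v : ℝ) * pi u v}

/-- The Lin-Lu-Yau curvature of an edge of a `d`-regular graph, via the idleness
`p = 1/(d+1)` formula of Bourne et al. -/
noncomputable def kappaLLY (G : SimpleGraph V) [DecidableRel G.Adj] (d : ℕ) (x y : V) :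
    ℝ :=
  ((d + 1 : ℝ) / d) *
    (1 - W1 G (muMeasure G (1 / (d + 1 : ℝ)) x) (muMeasure G (1 / (d + 1 : ℝ)) y))

/-- `N_x = Γ(x) \ ({y} ∪ Γ(y))`. -/
def Nset (G : SimpleGraph V) [DecidableRel G.Adj] (x y : V) : Finset V :=
  G.neighborFinset x \ insert y (G.neighborFinset y)

/-- `Δ_{xy} = Γ(x) ∩ Γ(y)`. -/
def Dset (G : SimpleGraph V) [DecidableRel G.Adj] (x y : V) : Finset V :=
  G.neighborFinset x ∩ G.neighborFinset y

/-!
With idleness `p = 1/(d+1)` both measures are uniform of mass `p` on closed neighbourhoods, so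
the mass on `{x, y} ∪ Δ` stays put and only the mass on `N_x` has to move to `N_y`. It is routed
by a doubly stochastic matrix on `N_x × N_y`: `u` sends `1/α` directly to each neighbour in `N_y`,
and `1/(α r_z)` through each `z ∈ Δ ∩ Γ(u)` to each neighbour of `z` in `N_y`, where
`r_z = |Γ(z) ∩ N_x| = |Γ(z) ∩ N_y|`. Since `β = α + 1`, every `u ∈ N_x` has exactly `α`
neighbours in `Δ ∪ N_y`, so the rows sum to `1`. Row `u` costs at most `1 + |Γ(u) ∩ Δ|/α`, and
`∑_u |Γ(u) ∩ Δ| = ∑_z r_z ≤ α²`, hence `W₁ ≤ p (|N_x| + α) = (d - 1)/(d + 1)`, i.e. `κ ≥ 2/d`.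
-/

section Transport

variable {α : Type*} [Fintype α]

noncomputable def transportCost (G : SimpleGraph α) (q : α → α → ℝ) : ℝ :=
  ∑ u, ∑ v, (G.dist u v : ℝ) * q u v

theorem W1_le_transportCost (G : SimpleGraph α) {μ₁ μ₂ : α → ℝ} {q : α → α → ℝ}
    (hq : IsTransportPlan μ₁ μ₂ q) : W1 G μ₁ μ₂ ≤ transportCost G q := by
  refine csInf_le ⟨0, ?_⟩ ⟨q, hq, rfl⟩
  rintro _ ⟨q', ⟨hq', -, -⟩, rfl⟩
  exact sum_nonneg fun u _ => sum_nonneg fun v _ => mul_nonneg (Nat.cast_nonneg _) (hq' u v)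

theorem IsTransportPlan.add {μ₁ μ₂ ν₁ ν₂ : α → ℝ} {q r : α → α → ℝ}
    (hq : IsTransportPlan μ₁ μ₂ q) (hr : IsTransportPlan ν₁ ν₂ r) :
    IsTransportPlan (μ₁ + ν₁) (μ₂ + ν₂) (q + r) :=
  ⟨fun u v => add_nonneg (hq.1 u v) (hr.1 u v),
    fun u => by simp [sum_add_distrib, hq.2.1, hr.2.1],
    fun v => by simp [sum_add_distrib, hq.2.2, hr.2.2]⟩

theorem isTransportPlan_diagonal [DecidableEq α] {ν : α → ℝ} (hν : 0 ≤ ν) :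
    IsTransportPlan ν ν (fun u v => if u = v then ν u else 0) :=
  ⟨fun u v => by dsimp only; split_ifs; exacts [hν u, le_rfl], fun u => by simp, fun v => by simp⟩

theorem W1_add_le [DecidableEq α] (G : SimpleGraph α) {ν μ₁ μ₂ : α → ℝ} {q : α → α → ℝ}
    (hν : 0 ≤ ν) (hq : IsTransportPlan μ₁ μ₂ q) :
    W1 G (ν + μ₁) (ν + μ₂) ≤ transportCost G q :=
  calc W1 G (ν + μ₁) (ν + μ₂)
      ≤ transportCost G ((fun u v => if u = v then ν u else 0) + q) :=
        W1_le_transportCost G ((isTransportPlan_diagonal hν).add hq)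
    _ = transportCost G q := by
        simp [transportCost, mul_add, sum_add_distrib]

def IsDoublyStochasticOn (s t : Finset α) (T : α → α → ℝ) : Prop :=
  (∀ u ∈ s, ∀ v ∈ t, 0 ≤ T u v) ∧ (∀ u ∈ s, ∑ v ∈ t, T u v = 1) ∧
    ∀ v ∈ t, ∑ u ∈ s, T u v = 1

theorem IsDoublyStochasticOn.isTransportPlan [DecidableEq α] {s t : Finset α} {T : α → α → ℝ}
    (hT : IsDoublyStochasticOn s t T) {c : ℝ} (hc : 0 ≤ c) :
    IsTransportPlan (fun u => if u ∈ s then c else 0) (fun v => if v ∈ t then c else 0)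
      (fun u v => if u ∈ s ∧ v ∈ t then c * T u v else 0) := by
  refine ⟨fun u v => ?_, fun u => ?_, fun v => ?_⟩
  · dsimp only
    split_ifs with h
    exacts [mul_nonneg hc (hT.1 u h.1 v h.2), le_rfl]
  · by_cases hu : u ∈ s
    · simp [hu, ← mul_sum, hT.2.1 u hu]
    · simp [hu]
  · by_cases hv : v ∈ t
    · simp [hv, ← mul_sum, hT.2.2 v hv]
    · simp [hv]

theorem W1_add_ite_le [DecidableEq α] (G : SimpleGraph α) {ν : α → ℝ} (hν : 0 ≤ ν)
    {s t : Finset α} {T : α → α → ℝ} (hT : IsDoublyStochasticOn s t T) {c : ℝ} (hc : 0 ≤ c) :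
    W1 G (ν + fun u => if u ∈ s then c else 0) (ν + fun v => if v ∈ t then c else 0) ≤
      c * ∑ u ∈ s, ∑ v ∈ t, (G.dist u v : ℝ) * T u v := by
  refine (W1_add_le G hν (hT.isTransportPlan hc)).trans_eq ?_
  simp [transportCost, ite_and, mul_sum, mul_left_comm]

end Transport

section Relay

variable (G : SimpleGraph V) [DecidableRel G.Adj]

theorem neighborFinset_inter_eq_filter (u : V) (t : Finset V) :
    G.neighborFinset u ∩ t = {v ∈ t | G.Adj u v} := by
  ext; simp [and_comm]

theorem sum_ite_adj (u : V) (t : Finset V) (c : ℝ) :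
    ∑ v ∈ t, (if G.Adj u v then c else 0) = #(G.neighborFinset u ∩ t) * c := by
  rw [← sum_filter, sum_const, nsmul_eq_mul, neighborFinset_inter_eq_filter]

theorem sum_card_neighborFinset_inter_comm (s t : Finset V) :
    ∑ u ∈ s, #(G.neighborFinset u ∩ t) = ∑ v ∈ t, #(G.neighborFinset v ∩ s) := by
  simp only [neighborFinset_inter_eq_filter, card_filter]
  rw [sum_comm]
  simp only [G.adj_comm]

theorem card_neighborFinset_inter_ne_zero {z u : V} {s : Finset V} (hzu : G.Adj z u)
    (hu : u ∈ s) : #(G.neighborFinset z ∩ s) ≠ 0 :=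
  card_ne_zero.2 ⟨u, mem_inter.2 ⟨(mem_neighborFinset G z u).2 hzu, hu⟩⟩

noncomputable def relayWeight (D s : Finset V) (a : ℕ) (u v : V) : ℝ :=
  ∑ z ∈ D, if G.Adj z u ∧ G.Adj z v then ((a : ℝ) * #(G.neighborFinset z ∩ s))⁻¹ else 0

variable {D s : Finset V} {a : ℕ}

theorem relayWeight_comm (u v : V) : relayWeight G D s a u v = relayWeight G D s a v u := by
  simp only [relayWeight, and_comm]

theorem relayWeight_nonneg (u v : V) : 0 ≤ relayWeight G D s a u v :=
  sum_nonneg fun z _ => by split_ifs <;> positivity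

theorem sum_relayWeight {u : V} {t : Finset V}
    (h : ∀ z ∈ D, G.Adj z u →
      #(G.neighborFinset z ∩ t) = #(G.neighborFinset z ∩ s) ∧ #(G.neighborFinset z ∩ s) ≠ 0) :
    ∑ v ∈ t, relayWeight G D s a u v = #(G.neighborFinset u ∩ D) * (a : ℝ)⁻¹ := by
  simp only [relayWeight]
  rw [sum_comm, ← sum_ite_adj]
  refine sum_congr rfl fun z hz => ?_
  by_cases hzu : G.Adj z u
  · obtain ⟨ht, hs⟩ := h z hz hzu
    simp only [hzu, true_and, sum_ite_adj, ht, G.adj_comm u z, if_true, mul_inv]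
    field_simp
  · simp [hzu, G.adj_comm u z]

theorem dist_mul_relayWeight_le (u v : V) :
    (G.dist u v : ℝ) * relayWeight G D s a u v ≤ 2 * relayWeight G D s a u v := by
  rw [relayWeight, mul_sum, mul_sum]
  refine sum_le_sum fun z _ => ?_
  split_ifs with h
  · have : G.dist u v ≤ 2 := by
      simpa using G.dist_le ((Walk.cons h.1.symm (Walk.cons h.2 Walk.nil)))
    gcongr
    exact_mod_cast this
  · simp

noncomputable def relayMatrix (D s : Finset V) (a : ℕ) (u v : V) : ℝ :=
  (if G.Adj u v then (a : ℝ)⁻¹ else 0) + relayWeight G D s a u v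

theorem relayMatrix_comm (u v : V) : relayMatrix G D s a u v = relayMatrix G D s a v u := by
  simp only [relayMatrix, G.adj_comm u v, relayWeight_comm G u v]

theorem sum_relayMatrix {u : V} {t : Finset V}
    (h : ∀ z ∈ D, G.Adj z u →
      #(G.neighborFinset z ∩ t) = #(G.neighborFinset z ∩ s) ∧ #(G.neighborFinset z ∩ s) ≠ 0) :
    ∑ v ∈ t, relayMatrix G D s a u v =
      (#(G.neighborFinset u ∩ D) + #(G.neighborFinset u ∩ t) : ℕ) * (a : ℝ)⁻¹ := by
  simp only [relayMatrix, sum_add_distrib, sum_ite_adj, sum_relayWeight G h]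
  push_cast
  ring

theorem dist_mul_relayMatrix_le (u v : V) :
    (G.dist u v : ℝ) * relayMatrix G D s a u v ≤
      relayMatrix G D s a u v + relayWeight G D s a u v := by
  rw [relayMatrix, mul_add, add_assoc, ← two_mul]
  refine add_le_add (le_of_eq ?_) (dist_mul_relayWeight_le G u v)
  split_ifs with h
  exacts [by simp [dist_eq_one_iff_adj.2 h], mul_zero _]

variable {t : Finset V}

theorem isDoublyStochasticOn_relayMatrix (ha : a ≠ 0)
    (hs : ∀ u ∈ s, #(G.neighborFinset u ∩ D) + #(G.neighborFinset u ∩ t) = a)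
    (ht : ∀ v ∈ t, #(G.neighborFinset v ∩ D) + #(G.neighborFinset v ∩ s) = a)
    (hD : ∀ z ∈ D, #(G.neighborFinset z ∩ s) = #(G.neighborFinset z ∩ t)) :
    IsDoublyStochasticOn s t (relayMatrix G D s a) := by
  have ha' : (a : ℝ) ≠ 0 := Nat.cast_ne_zero.2 ha
  refine ⟨fun u _ v _ => ?_, fun u hu => ?_, fun v hv => ?_⟩
  · have := relayWeight_nonneg G (D := D) (s := s) (a := a) u v
    rw [relayMatrix]
    positivity
  · rw [sum_relayMatrix G fun z hz hzu => ⟨(hD z hz).symm,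
      card_neighborFinset_inter_ne_zero G hzu hu⟩, hs u hu, mul_inv_cancel₀ ha']
  · simp only [relayMatrix_comm G _ v]
    rw [sum_relayMatrix G fun z hz hzv => ⟨rfl,
      hD z hz ▸ card_neighborFinset_inter_ne_zero G hzv hv⟩, ht v hv, mul_inv_cancel₀ ha']

theorem sum_dist_mul_relayMatrix_le (ha : a ≠ 0)
    (hs : ∀ u ∈ s, #(G.neighborFinset u ∩ D) + #(G.neighborFinset u ∩ t) = a)
    (hD : ∀ z ∈ D, #(G.neighborFinset z ∩ s) = #(G.neighborFinset z ∩ t)) :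
    ∑ u ∈ s, ∑ v ∈ t, (G.dist u v : ℝ) * relayMatrix G D s a u v ≤
      #s + (∑ u ∈ s, #(G.neighborFinset u ∩ D) : ℕ) / (a : ℝ) := by
  calc ∑ u ∈ s, ∑ v ∈ t, (G.dist u v : ℝ) * relayMatrix G D s a u v
      ≤ ∑ u ∈ s, ∑ v ∈ t, (relayMatrix G D s a u v + relayWeight G D s a u v) := by
        gcongr with u _ v _
        exact dist_mul_relayMatrix_le G u v
    _ = ∑ u ∈ s, (1 + #(G.neighborFinset u ∩ D) * (a : ℝ)⁻¹) := by
        refine sum_congr rfl fun u hu => ?_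
        have h z (hz : z ∈ D) (hzu : G.Adj z u) :=
          And.intro (hD z hz).symm (card_neighborFinset_inter_ne_zero G hzu hu)
        rw [sum_add_distrib, sum_relayMatrix G h, sum_relayWeight G h, hs u hu,
          mul_inv_cancel₀ (Nat.cast_ne_zero.2 ha)]
    _ = #s + (∑ u ∈ s, #(G.neighborFinset u ∩ D) : ℕ) / (a : ℝ) := by
        simp [sum_add_distrib, ← sum_mul, div_eq_mul_inv]

end Relay

section Edge

variable {G : SimpleGraph V} [DecidableRel G.Adj] {x y : V}

theorem mem_Nset {u : V} : u ∈ Nset G x y ↔ G.Adj x u ∧ u ≠ y ∧ ¬G.Adj y u := by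
  simp [Nset, not_or]

theorem mem_Dset {u : V} : u ∈ Dset G x y ↔ G.Adj x u ∧ G.Adj y u := by
  simp [Dset]

theorem Dset_comm (G : SimpleGraph V) [DecidableRel G.Adj] (x y : V) :
    Dset G x y = Dset G y x :=
  inter_comm _ _

theorem neighborFinset_eq_insert_Dset_union_Nset (hxy : G.Adj x y) :
    G.neighborFinset x = insert y (Dset G x y ∪ Nset G x y) := by
  ext u
  simp only [mem_insert, mem_union, mem_Dset, mem_Nset, mem_neighborFinset]
  by_cases huy : u = y
  · simp [huy, hxy]
  · tauto

theorem card_inter_neighborFinset (hxy : G.Adj x y) {s : Finset V} (hy : y ∈ s) :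
    #(s ∩ G.neighborFinset x) = #(s ∩ Dset G x y) + #(s ∩ Nset G x y) + 1 := by
  have hdisj : Disjoint (s ∩ Dset G x y) (s ∩ Nset G x y) :=
    disjoint_left.2 fun u hD hN =>
      (mem_Nset.1 (mem_inter.1 hN).2).2.2 (mem_Dset.1 (mem_inter.1 hD).2).2
  have hy' : y ∉ s ∩ Dset G x y ∪ s ∩ Nset G x y := by
    simp [mem_Dset, mem_Nset]
  rw [neighborFinset_eq_insert_Dset_union_Nset hxy, inter_insert_of_mem hy,
    inter_union_distrib_left, card_insert_of_notMem hy', card_union_of_disjoint hdisj]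

theorem dist_eq_two_of_mem_Nset (hxy : G.Adj x y) {u : V} (hu : u ∈ Nset G x y) :
    G.dist u y = 2 := by
  obtain ⟨hxu, huy, hyu⟩ := mem_Nset.1 hu
  have hle : G.dist u y ≤ 2 := by
    simpa using G.dist_le (Walk.cons hxu.symm (Walk.cons hxy Walk.nil))
  have h0 : G.dist u y ≠ 0 :=
    (Reachable.dist_eq_zero_iff ⟨Walk.cons hxu.symm (Walk.cons hxy Walk.nil)⟩).not.2 huy
  have h1 : G.dist u y ≠ 1 := dist_eq_one_iff_adj.not.2 fun h => hyu h.symm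
  omega

theorem Nset_eq_sdiff (hxy : G.Adj x y) :
    Nset G x y = insert x (G.neighborFinset x) \ insert y (G.neighborFinset y) := by
  ext u
  simp only [mem_Nset, mem_sdiff, mem_insert, mem_neighborFinset]
  by_cases hux : u = x
  · simp [hux, hxy.symm]
  · tauto

theorem muMeasure_eq_ite_mem {p : ℝ} (hp : (1 - p) / G.degree x = p) (v : V) :
    muMeasure G p x v = if v ∈ insert x (G.neighborFinset x) then p else 0 := by
  simp only [muMeasure, hp, mem_insert, mem_neighborFinset]
  split_ifs <;> tauto

theorem muMeasure_eq_add {p : ℝ} (hp : (1 - p) / G.degree x = p) (hxy : G.Adj x y) :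
    muMeasure G p x =
      (fun v => if v ∈ insert x (G.neighborFinset x) ∩ insert y (G.neighborFinset y) then p
        else 0) + fun v => if v ∈ Nset G x y then p else 0 := by
  ext v
  rw [Pi.add_apply, muMeasure_eq_ite_mem hp, Nset_eq_sdiff hxy]
  by_cases h₁ : v ∈ insert x (G.neighborFinset x) <;>
    by_cases h₂ : v ∈ insert y (G.neighborFinset y) <;> simp [h₁, h₂]

end Edge

section AmplyRegular

variable {G : SimpleGraph V} [DecidableRel G.Adj] {x y : V} {a : ℕ}

theorem card_inter_Dset_add_card_inter_Nset
    (hB : ∀ u v, G.dist u v = 2 → #(G.neighborFinset u ∩ G.neighborFinset v) = a + 1)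
    (hxy : G.Adj x y) {u : V} (hu : u ∈ Nset G x y) :
    #(G.neighborFinset u ∩ Dset G x y) + #(G.neighborFinset u ∩ Nset G y x) = a := by
  have hxu : x ∈ G.neighborFinset u := by simpa [adj_comm] using (mem_Nset.1 hu).1
  have := card_inter_neighborFinset hxy.symm hxu
  rw [hB u y (dist_eq_two_of_mem_Nset hxy hu), Dset_comm] at this
  omega

theorem card_inter_Nset_eq_of_mem_Dset
    (hA : ∀ u v, G.Adj u v → #(G.neighborFinset u ∩ G.neighborFinset v) = a)
    (hxy : G.Adj x y) {z : V} (hz : z ∈ Dset G x y) :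
    #(G.neighborFinset z ∩ Nset G x y) = #(G.neighborFinset z ∩ Nset G y x) := by
  obtain ⟨hxz, hyz⟩ := mem_Dset.1 hz
  -- both sides equal `a - 1 - #(Γ(z) ∩ Δ)`
  have hx := card_inter_neighborFinset hxy (s := G.neighborFinset z) (by simpa [adj_comm] using hyz)
  have hy := card_inter_neighborFinset hxy.symm (s := G.neighborFinset z)
    (by simpa [adj_comm] using hxz)
  rw [hA z x hxz.symm] at hx
  rw [hA z y hyz.symm, ← Dset_comm] at hy
  omega

theorem card_inter_Nset_le
    (hA : ∀ u v, G.Adj u v → #(G.neighborFinset u ∩ G.neighborFinset v) = a)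
    {z : V} (hz : z ∈ Dset G x y) : #(G.neighborFinset z ∩ Nset G x y) ≤ a :=
  (card_le_card (inter_subset_inter_left sdiff_subset)).trans_eq
    (hA z x (mem_Dset.1 hz).1.symm)

theorem degree_eq_card_Nset_add
    (hA : ∀ u v, G.Adj u v → #(G.neighborFinset u ∩ G.neighborFinset v) = a)
    (hxy : G.Adj x y) : G.degree x = #(Nset G x y) + a + 1 := by
  have := card_inter_neighborFinset hxy (mem_univ y)
  simp only [univ_inter, card_neighborFinset_eq_degree] at this
  rw [this, Dset, hA x y hxy]
  ring

theorem exists_isDoublyStochasticOn_Nset (ha : a ≠ 0)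
    (hA : ∀ u v, G.Adj u v → #(G.neighborFinset u ∩ G.neighborFinset v) = a)
    (hB : ∀ u v, G.dist u v = 2 → #(G.neighborFinset u ∩ G.neighborFinset v) = a + 1)
    (hxy : G.Adj x y) :
    ∃ T, IsDoublyStochasticOn (Nset G x y) (Nset G y x) T ∧
      ∑ u ∈ Nset G x y, ∑ v ∈ Nset G y x, (G.dist u v : ℝ) * T u v ≤ #(Nset G x y) + a := by
  have hs := fun u (hu : u ∈ Nset G x y) => card_inter_Dset_add_card_inter_Nset hB hxy hu
  have ht := fun v (hv : v ∈ Nset G y x) =>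
    Dset_comm G x y ▸ card_inter_Dset_add_card_inter_Nset hB hxy.symm hv
  have hD := fun z (hz : z ∈ Dset G x y) => card_inter_Nset_eq_of_mem_Dset hA hxy hz
  refine ⟨_, isDoublyStochasticOn_relayMatrix G ha hs ht hD,
    (sum_dist_mul_relayMatrix_le G ha hs hD).trans ?_⟩
  have hsum : ∑ u ∈ Nset G x y, #(G.neighborFinset u ∩ Dset G x y) ≤ a * a := by
    calc _ = ∑ z ∈ Dset G x y, #(G.neighborFinset z ∩ Nset G x y) :=
          sum_card_neighborFinset_inter_comm G _ _
      _ ≤ #(Dset G x y) • a := sum_le_card_nsmul _ _ _ fun z hz => card_inter_Nset_le hA hz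
      _ = a * a := by rw [Dset, hA x y hxy, smul_eq_mul]
  gcongr
  rw [div_le_iff₀ (by positivity)]
  exact_mod_cast hsum

end AmplyRegular

theorem W1_muMeasure_le {G : SimpleGraph V} [DecidableRel G.Adj] {x y : V} {d a : ℕ}
    (hreg : G.IsRegularOfDegree d) (ha : a ≠ 0)
    (hA : ∀ u v, G.Adj u v → #(G.neighborFinset u ∩ G.neighborFinset v) = a)
    (hB : ∀ u v, G.dist u v = 2 → #(G.neighborFinset u ∩ G.neighborFinset v) = a + 1)
    (hxy : G.Adj x y) :
    W1 G (muMeasure G (1 / (d + 1 : ℝ)) x) (muMeasure G (1 / (d + 1 : ℝ)) y) ≤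
      (d - 1) / (d + 1) := by
  have hd : (d : ℝ) = #(Nset G x y) + a + 1 := by
    exact_mod_cast hreg x ▸ degree_eq_card_Nset_add hA hxy
  have hd₀ : (d : ℝ) ≠ 0 := by rw [hd]; positivity
  have hp : ∀ v, (1 - 1 / (d + 1 : ℝ)) / G.degree v = 1 / (d + 1 : ℝ) := fun v => by
    rw [hreg v]
    field_simp
    ring
  obtain ⟨T, hT, hcost⟩ := exists_isDoublyStochasticOn_Nset ha hA hB hxy
  rw [muMeasure_eq_add (hp x) hxy, muMeasure_eq_add (hp y) hxy.symm, inter_comm (insert y _)]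
  refine (W1_add_ite_le G (fun v => by positivity) hT (by positivity)).trans ?_
  calc 1 / (d + 1 : ℝ) * ∑ u ∈ Nset G x y, ∑ v ∈ Nset G y x, (G.dist u v : ℝ) * T u v
      ≤ 1 / (d + 1 : ℝ) * (#(Nset G x y) + a) := by gcongr
    _ = (d - 1) / (d + 1) := by rw [hd]; field_simp; ring

theorem le_kappaLLY_of_W1_le {G : SimpleGraph V} [DecidableRel G.Adj] {x y : V} {d : ℕ}
    (hd : 0 < d)
    (hW : W1 G (muMeasure G (1 / (d + 1 : ℝ)) x) (muMeasure G (1 / (d + 1 : ℝ)) y) ≤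
      (d - 1) / (d + 1)) :
    2 / d ≤ kappaLLY G d x y := by
  calc (2 : ℝ) / d = (d + 1) / d * (1 - (d - 1) / (d + 1)) := by field_simp; ring
    _ ≤ kappaLLY G d x y := by unfold kappaLLY; gcongr

/-- In an amply regular graph with `α ≥ 1` and `α = β - 1`, every edge has Lin-Lu-Yau
curvature at least `2/d`. -/
theorem stmt9 (G : SimpleGraph V) [DecidableRel G.Adj] {n d a b : ℕ}
    (h : G.IsAmplyRegular n d a b) (ha : 1 ≤ a) (hab : a = b - 1)
    (x y : V) (hxy : G.Adj x y) :
    (2 : ℝ) / d ≤ kappaLLY G d x y := by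
  obtain ⟨-, hreg, hA, hB⟩ := h
  have hd : 0 < d := hreg x ▸ (G.degree_pos_iff_exists_adj x).2 ⟨y, hxy⟩
  refine le_kappaLLY_of_W1_le hd (W1_muMeasure_le hreg (by omega) hA (fun u v huv => ?_) hxy)
  rw [hB u v huv]
  omega
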